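/- arXiv:1210.1618 — 5 statements merged into one kernel-verified Lean document; each statement's English description precedes it below -/
import Mathlib

section
/- Suppose c = 0, r > 0, η > r²/2, and ‖f‖ < ½(r²/2 − η)²/r. Then every z with ½(½‖z‖² − η)² − fᵗz = 0 satisfies ½(‖z‖² − r²) > 0, i.e., ‖z‖ > r. -/
/-!
On the closed ball `‖z‖ ≤ r` the quartic term `½(½‖z‖² − η)²` is at least `½(r²/2 − η)²`,
because `½‖z‖² ≤ r²/2 ≤ η`, while by Cauchy–Schwarz the linear term `⟪f, z⟫` is at most
`‖f‖ r`, which the bound on `‖f‖` makes strictly smaller. So `g` has no zero in that ball.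
-/

open scoped RealInnerProductSpace

lemma sq_sub_le_sq_sub_of_le {a b c : ℝ} (hab : a ≤ b) (hbc : b ≤ c) :
    (b - c) ^ 2 ≤ (a - c) ^ 2 := by
  nlinarith

lemma real_inner_le_norm_mul_of_norm_le {E : Type*} [SeminormedAddCommGroup E]
    [InnerProductSpace ℝ E] {r : ℝ} (f : E) {z : E} (hz : ‖z‖ ≤ r) :
    ⟪f, z⟫ ≤ ‖f‖ * r :=
  (real_inner_le_norm f z).trans (mul_le_mul_of_nonneg_left hz (norm_nonneg f))

lemma lt_norm_of_sq_sub_eq_inner {E : Type*} [SeminormedAddCommGroup E]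
    [InnerProductSpace ℝ E] {r η : ℝ} {f z : E} (hr : 0 < r) (hη : r ^ 2 / 2 ≤ η)
    (hf : ‖f‖ < 1 / 2 * (r ^ 2 / 2 - η) ^ 2 / r)
    (hz : 1 / 2 * (1 / 2 * ‖z‖ ^ 2 - η) ^ 2 = ⟪f, z⟫) :
    r < ‖z‖ := by
  by_contra! hzr
  have hinner : ⟪f, z⟫ ≤ ‖f‖ * r := real_inner_le_norm_mul_of_norm_le f hzr
  have hfr : ‖f‖ * r < 1 / 2 * (r ^ 2 / 2 - η) ^ 2 := (lt_div_iff₀ hr).mp hf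
  have hnorm_sq : 1 / 2 * ‖z‖ ^ 2 ≤ r ^ 2 / 2 := by nlinarith [norm_nonneg z]
  have hquartic : (r ^ 2 / 2 - η) ^ 2 ≤ (1 / 2 * ‖z‖ ^ 2 - η) ^ 2 :=
    sq_sub_le_sq_sub_of_le hnorm_sq hη
  linarith

/-- Every z on the surface g(z) = 0 satisfies h(z) > 0, i.e. ‖z‖ > r. -/
theorem stmt_4 (n : ℕ) (r η : ℝ) (f : EuclideanSpace ℝ (Fin n))
    (hr : 0 < r) (hη : r ^ 2 / 2 < η)
    (hf : ‖f‖ < 1 / 2 * (r ^ 2 / 2 - η) ^ 2 / r)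
    (z : EuclideanSpace ℝ (Fin n))
    (hz : 1 / 2 * (1 / 2 * ‖z‖ ^ 2 - η) ^ 2 - ⟪f, z⟫ = 0) :
    1 / 2 * (‖z‖ ^ 2 - r ^ 2) > 0 := by
  have hrz : r < ‖z‖ := lt_norm_of_sq_sub_eq_inner hr hη.le hf (sub_eq_zero.mp hz)
  have hsq : r ^ 2 < ‖z‖ ^ 2 := pow_lt_pow_left₀ hrz hr.le two_ne_zero
  linarith
end

section
/- Let (x, λ, μ, ς) with x = (y, z) be a stationary point of Ξ. If μ ≠ 0, then x ∈ X_c, i.e., h(y) = 0 and g(z) = 0. -/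
open scoped RealInnerProductSpace

/-- At a stationary point of Ξ, μ ≠ 0 implies feasibility: h(y) = 0 and g(z) = 0. -/
theorem stmt_7 (n : ℕ) (A : Matrix (Fin n) (Fin n) ℝ) (hA : A.PosDef)
    (r α η : ℝ) (hr : 0 < r) (hα : 0 < α)
    (f c : EuclideanSpace ℝ (Fin n))
    (y z : EuclideanSpace ℝ (Fin n)) (lam mu sig : ℝ)
    (e1 : y - z + lam • (Matrix.toEuclideanLin A y) = 0)
    (e2 : z - y + (mu * sig) • (z - c) - mu • f = 0)
    (e3 : 1 / 2 * (⟪y, Matrix.toEuclideanLin A y⟫ - r ^ 2) = 0)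
    (e4 : (1 / 2 * ‖z - c‖ ^ 2) * sig - (sig ^ 2 / (2 * α) + η * sig) - ⟪f, z - c⟫ = 0)
    (e5 : mu * (1 / 2 * ‖z - c‖ ^ 2 - (sig / α + η)) = 0) :
    mu ≠ 0 →
      1 / 2 * (⟪y, Matrix.toEuclideanLin A y⟫ - r ^ 2) = 0 ∧
      α / 2 * (1 / 2 * ‖z - c‖ ^ 2 - η) ^ 2 - ⟪f, z - c⟫ = 0 := by
  intro hmu
  refine ⟨e3, ?_⟩
  have key : 1 / 2 * ‖z - c‖ ^ 2 - (sig / α + η) = 0 :=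
    (mul_eq_zero.mp e5).resolve_left hmu
  have hα' : α ≠ 0 := ne_of_gt hα
  have h1 : (1:ℝ) / 2 * ‖z - c‖ ^ 2 = sig / α + η := by linarith
  rw [h1] at e4 ⊢
  field_simp at e4 ⊢
  nlinarith [e4, sq_nonneg sig]
end

section
/- Let (x, λ, μ, ς) be a stationary point of Ξ, where the two surfaces Y_c and Z_c are disjoint. Then the following are equivalent: (a) μ = 0; (b) λ = 0; (c) x ∉ X_c = Y_c × Z_c. -/
/-!
On `X_c` the multiplier equations degenerate in a controlled way. If `μ = 0`, the `z`-equation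
forces `z = y`, and then `y + λ A y = y` with `A y ≠ 0` (as `yᵗAy = r² ≠ 0`) gives `λ = 0`.
If `λ = 0`, the `y`-equation forces `y = z`, so `x ∈ X_c` would put `y` in `Y_c ∩ Z_c = ∅`.
If `μ ≠ 0`, complementary slackness gives the dual relation `ς = α (Λ(z) − η)`, under which the
`ς`-equation becomes `g(z) = 0`; together with `h(y) = 0` this says `x ∈ X_c`.
-/

open scoped RealInnerProductSpace

theorem primal_eq_zero_of_dual_stationary {α η Λ ς t : ℝ} (hα : α ≠ 0) (hΛ : Λ = ς / α + η)
    (h : Λ * ς - (ς ^ 2 / (2 * α) + η * ς) - t = 0) :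
    α / 2 * (Λ - η) ^ 2 - t = 0 := by
  subst hΛ
  -- both sides equal `ς² / (2α) - t`
  calc α / 2 * (ς / α + η - η) ^ 2 - t
      = (ς / α + η) * ς - (ς ^ 2 / (2 * α) + η * ς) - t := by field_simp; ring
    _ = 0 := h

theorem apply_ne_zero_of_inner_apply_eq_sq {E : Type*} [NormedAddCommGroup E]
    [InnerProductSpace ℝ E] {T : E → E} {y : E} {r : ℝ} (hr : r ≠ 0)
    (hy : ⟪y, T y⟫ = r ^ 2) : T y ≠ 0 := by
  intro hTy
  rw [hTy, inner_zero_right] at hy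
  exact hr (pow_eq_zero_iff two_ne_zero |>.mp hy.symm)

theorem stmt_8_general (n : ℕ) (A : Matrix (Fin n) (Fin n) ℝ)
    (r α η : ℝ) (hr : 0 < r) (hα : 0 < α)
    (f c : EuclideanSpace ℝ (Fin n))
    (y z : EuclideanSpace ℝ (Fin n)) (lam mu sig : ℝ)
    (e1 : y - z + lam • (Matrix.toEuclideanLin A y) = 0)
    (e2 : z - y + (mu * sig) • (z - c) - mu • f = 0)
    (e3 : 1 / 2 * (⟪y, Matrix.toEuclideanLin A y⟫ - r ^ 2) = 0)
    (e4 : (1 / 2 * ‖z - c‖ ^ 2) * sig - (sig ^ 2 / (2 * α) + η * sig) - ⟪f, z - c⟫ = 0)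
    (e5 : mu * (1 / 2 * ‖z - c‖ ^ 2 - (sig / α + η)) = 0)
    (hdisj : ∀ w : EuclideanSpace ℝ (Fin n),
      ¬(1 / 2 * (⟪w, Matrix.toEuclideanLin A w⟫ - r ^ 2) = 0 ∧
        α / 2 * (1 / 2 * ‖w - c‖ ^ 2 - η) ^ 2 - ⟪f, w - c⟫ = 0)) :
    List.TFAE [mu = 0, lam = 0,
      ¬(1 / 2 * (⟪y, Matrix.toEuclideanLin A y⟫ - r ^ 2) = 0 ∧
        α / 2 * (1 / 2 * ‖z - c‖ ^ 2 - η) ^ 2 - ⟪f, z - c⟫ = 0)] := by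
  tfae_have 1 → 2 := by
    intro hmu
    have hzy : z = y := by simpa [hmu, sub_eq_zero] using e2
    have hY : ⟪y, Matrix.toEuclideanLin A y⟫ = r ^ 2 := by linarith
    rw [hzy, sub_self, zero_add, smul_eq_zero] at e1
    exact e1.resolve_right (apply_ne_zero_of_inner_apply_eq_sq hr.ne' hY)
  tfae_have 2 → 3 := by
    rintro hlam ⟨hyY, hzZ⟩
    have hyz : y = z := by simpa [hlam, sub_eq_zero] using e1
    exact hdisj y ⟨hyY, hyz ▸ hzZ⟩
  tfae_have 3 → 1 := by
    intro hnotX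
    by_contra hmu
    have hΛ : 1 / 2 * ‖z - c‖ ^ 2 = sig / α + η :=
      sub_eq_zero.mp ((mul_eq_zero.mp e5).resolve_left hmu)
    exact hnotX ⟨e3, primal_eq_zero_of_dual_stationary hα.ne' hΛ e4⟩
  tfae_finish

/-- At a stationary point of Ξ with disjoint surfaces: μ = 0 ↔ λ = 0 ↔ x ∉ X_c. -/
theorem stmt_8 (n : ℕ) (A : Matrix (Fin n) (Fin n) ℝ) (hA : A.PosDef)
    (r α η : ℝ) (hr : 0 < r) (hα : 0 < α)
    (f c : EuclideanSpace ℝ (Fin n))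
    (y z : EuclideanSpace ℝ (Fin n)) (lam mu sig : ℝ)
    (e1 : y - z + lam • (Matrix.toEuclideanLin A y) = 0)
    (e2 : z - y + (mu * sig) • (z - c) - mu • f = 0)
    (e3 : 1 / 2 * (⟪y, Matrix.toEuclideanLin A y⟫ - r ^ 2) = 0)
    (e4 : (1 / 2 * ‖z - c‖ ^ 2) * sig - (sig ^ 2 / (2 * α) + η * sig) - ⟪f, z - c⟫ = 0)
    (e5 : mu * (1 / 2 * ‖z - c‖ ^ 2 - (sig / α + η)) = 0)
    (hdisj : ∀ w : EuclideanSpace ℝ (Fin n),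
      ¬(1 / 2 * (⟪w, Matrix.toEuclideanLin A w⟫ - r ^ 2) = 0 ∧
        α / 2 * (1 / 2 * ‖w - c‖ ^ 2 - η) ^ 2 - ⟪f, w - c⟫ = 0)) :
    List.TFAE [mu = 0, lam = 0,
      ¬(1 / 2 * (⟪y, Matrix.toEuclideanLin A y⟫ - r ^ 2) = 0 ∧
        α / 2 * (1 / 2 * ‖z - c‖ ^ 2 - η) ^ 2 - ⟪f, z - c⟫ = 0)] :=
  stmt_8_general n A r α η hr hα f c y z lam mu sig e1 e2 e3 e4 e5 hdisj
end

section
/- (Complementary-dual principle) If (x̄, λ̄, μ̄, ς̄) is a stationary point of Ξ with (λ̄, μ̄, ς̄) ∈ S_a, then x̄ is a critical point of the constrained problem (P) with Lagrange multipliers λ̄, μ̄, and Π(x̄) = L(x̄, λ̄, μ̄) = Ξ(x̄, λ̄, μ̄, ς̄). -/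
open scoped RealInnerProductSpace

/-! The multiplier `μ` cannot vanish: otherwise the `z`-equation forces `z = y`, the `y`-equation
becomes `(λ A) y = 0`, and the `S_a` condition degenerates to invertibility of `λ A`, so `y = 0`,
which is not on the ellipsoid `yᵀ A y = r²`. Once `μ ≠ 0`, complementarity gives
`ς = α (½‖z - c‖² - η) = V'(Λ(z))`, and the Fenchel–Young equality `V(Λ) = Λ ς - V*(ς)` turns the
`ς`-stationarity equation into `g(z) = 0` and the `z`-equation into `∇_z L = 0`. Both constraint
values then vanish, so `Π`, `L` and `Ξ` coincide. -/

theorem Matrix.toEuclideanLin_injective_of_isUnit {𝕜 n : Type*} [RCLike 𝕜] [Fintype n]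
    [DecidableEq n] {M : Matrix n n 𝕜} (hM : IsUnit M) :
    Function.Injective (Matrix.toEuclideanLin M) := fun _ _ h =>
  WithLp.ofLp_injective 2 (Matrix.mulVec_injective_of_isUnit hM (congrArg WithLp.ofLp h))

theorem multiplier_ne_zero_of_isUnit {n : ℕ} {A : Matrix (Fin n) (Fin n) ℝ}
    {y z c f : EuclideanSpace ℝ (Fin n)} {lam mu sig : ℝ} (hy : y ≠ 0)
    (hy_stat : y - z + lam • Matrix.toEuclideanLin A y = 0)
    (hz_stat : z - y + (mu * sig) • (z - c) - mu • f = 0)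
    (hSa : IsUnit ((1 + mu * sig) • (1 + lam • A) - 1)) :
    mu ≠ 0 := by
  rintro rfl
  have hzy : z = y := sub_eq_zero.mp (by simpa using hz_stat)
  have hunit : IsUnit (lam • A) := by simpa using hSa
  have hAy : Matrix.toEuclideanLin (lam • A) y = Matrix.toEuclideanLin (lam • A) 0 := by
    simpa [hzy] using hy_stat
  exact hy (Matrix.toEuclideanLin_injective_of_isUnit hunit hAy)

theorem quadratic_fenchelYoung_eq {α η t sig : ℝ} (hα : α ≠ 0) (hsig : α * (t - η) = sig) :
    α / 2 * (t - η) ^ 2 = t * sig - (sig ^ 2 / (2 * α) + η * sig) := by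
  subst hsig
  field_simp
  ring

theorem stmt_13_general (n : ℕ) (A : Matrix (Fin n) (Fin n) ℝ)
    (r α η : ℝ) (hr : 0 < r) (hα : 0 < α)
    (f c : EuclideanSpace ℝ (Fin n))
    (y z : EuclideanSpace ℝ (Fin n)) (lam mu sig : ℝ)
    (e1 : y - z + lam • (Matrix.toEuclideanLin A y) = 0)
    (e2 : z - y + (mu * sig) • (z - c) - mu • f = 0)
    (e3 : 1 / 2 * (⟪y, Matrix.toEuclideanLin A y⟫ - r ^ 2) = 0)
    (e4 : (1 / 2 * ‖z - c‖ ^ 2) * sig - (sig ^ 2 / (2 * α) + η * sig) - ⟪f, z - c⟫ = 0)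
    (e5 : mu * (1 / 2 * ‖z - c‖ ^ 2 - (sig / α + η)) = 0)
    (hSa : IsUnit ((1 + mu * sig) • (1 + lam • A) - 1)) :
    -- x̄ is a critical (KKT) point of (P): ∇ₓL = 0 and feasibility
    (y - z + lam • (Matrix.toEuclideanLin A y) = 0) ∧
    (z - y + mu • ((α * (1 / 2 * ‖z - c‖ ^ 2 - η)) • (z - c) - f) = 0) ∧
    (1 / 2 * (⟪y, Matrix.toEuclideanLin A y⟫ - r ^ 2) = 0) ∧
    (α / 2 * (1 / 2 * ‖z - c‖ ^ 2 - η) ^ 2 - ⟪f, z - c⟫ = 0) ∧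
    -- Π(x̄) = L(x̄, λ, μ) = Ξ(x̄, λ, μ, ς)
    (1 / 2 * ‖y - z‖ ^ 2 =
      1 / 2 * ‖y - z‖ ^ 2 +
        lam * (1 / 2 * (⟪y, Matrix.toEuclideanLin A y⟫ - r ^ 2)) +
        mu * (α / 2 * (1 / 2 * ‖z - c‖ ^ 2 - η) ^ 2 - ⟪f, z - c⟫)) ∧
    (1 / 2 * ‖y - z‖ ^ 2 +
        lam * (1 / 2 * (⟪y, Matrix.toEuclideanLin A y⟫ - r ^ 2)) +
        mu * (α / 2 * (1 / 2 * ‖z - c‖ ^ 2 - η) ^ 2 - ⟪f, z - c⟫) =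
      1 / 2 * ‖y - z‖ ^ 2 +
        lam * (1 / 2 * (⟪y, Matrix.toEuclideanLin A y⟫ - r ^ 2)) +
        mu * ((1 / 2 * ‖z - c‖ ^ 2) * sig - (sig ^ 2 / (2 * α) + η * sig) -
          ⟪f, z - c⟫)) := by
  have hy : y ≠ 0 := by
    rintro rfl
    simp only [map_zero, inner_zero_left, zero_sub] at e3
    nlinarith
  have hmu := multiplier_ne_zero_of_isUnit hy e1 e2 hSa
  have hsig : α * (1 / 2 * ‖z - c‖ ^ 2 - η) = sig := by
    have h := (mul_eq_zero.mp e5).resolve_left hmu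
    field_simp at h ⊢
    linarith
  have hg : α / 2 * (1 / 2 * ‖z - c‖ ^ 2 - η) ^ 2 - ⟪f, z - c⟫ = 0 := by
    rw [quadratic_fenchelYoung_eq hα.ne' hsig]
    exact e4
  refine ⟨e1, ?_, e3, hg, by rw [e3, hg]; ring, by rw [e3, hg, e4]⟩
  rw [hsig, ← e2, smul_sub, smul_smul]
  abel

/-- Complementary-dual principle: a stationary point of Ξ with (λ,μ,ς) ∈ S_a gives a
critical point of (P) with λ, μ its Lagrange multipliers and Π(x̄) = L(x̄,λ,μ) = Ξ(x̄,λ,μ,ς). -/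
theorem stmt_13 (n : ℕ) (A : Matrix (Fin n) (Fin n) ℝ) (hA : A.PosDef)
    (r α η : ℝ) (hr : 0 < r) (hα : 0 < α)
    (f c : EuclideanSpace ℝ (Fin n))
    (hdisj : ∀ w : EuclideanSpace ℝ (Fin n),
      ¬(1 / 2 * (⟪w, Matrix.toEuclideanLin A w⟫ - r ^ 2) = 0 ∧
        α / 2 * (1 / 2 * ‖w - c‖ ^ 2 - η) ^ 2 - ⟪f, w - c⟫ = 0))
    (y z : EuclideanSpace ℝ (Fin n)) (lam mu sig : ℝ)
    (e1 : y - z + lam • (Matrix.toEuclideanLin A y) = 0)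
    (e2 : z - y + (mu * sig) • (z - c) - mu • f = 0)
    (e3 : 1 / 2 * (⟪y, Matrix.toEuclideanLin A y⟫ - r ^ 2) = 0)
    (e4 : (1 / 2 * ‖z - c‖ ^ 2) * sig - (sig ^ 2 / (2 * α) + η * sig) - ⟪f, z - c⟫ = 0)
    (e5 : mu * (1 / 2 * ‖z - c‖ ^ 2 - (sig / α + η)) = 0)
    (hSa : IsUnit ((1 + mu * sig) • (1 + lam • A) - 1)) :
    -- x̄ is a critical (KKT) point of (P): ∇ₓL = 0 and feasibility
    (y - z + lam • (Matrix.toEuclideanLin A y) = 0) ∧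
    (z - y + mu • ((α * (1 / 2 * ‖z - c‖ ^ 2 - η)) • (z - c) - f) = 0) ∧
    (1 / 2 * (⟪y, Matrix.toEuclideanLin A y⟫ - r ^ 2) = 0) ∧
    (α / 2 * (1 / 2 * ‖z - c‖ ^ 2 - η) ^ 2 - ⟪f, z - c⟫ = 0) ∧
    -- Π(x̄) = L(x̄, λ, μ) = Ξ(x̄, λ, μ, ς)
    (1 / 2 * ‖y - z‖ ^ 2 =
      1 / 2 * ‖y - z‖ ^ 2 +
        lam * (1 / 2 * (⟪y, Matrix.toEuclideanLin A y⟫ - r ^ 2)) +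
        mu * (α / 2 * (1 / 2 * ‖z - c‖ ^ 2 - η) ^ 2 - ⟪f, z - c⟫)) ∧
    (1 / 2 * ‖y - z‖ ^ 2 +
        lam * (1 / 2 * (⟪y, Matrix.toEuclideanLin A y⟫ - r ^ 2)) +
        mu * (α / 2 * (1 / 2 * ‖z - c‖ ^ 2 - η) ^ 2 - ⟪f, z - c⟫) =
      1 / 2 * ‖y - z‖ ^ 2 +
        lam * (1 / 2 * (⟪y, Matrix.toEuclideanLin A y⟫ - r ^ 2)) +
        mu * ((1 / 2 * ‖z - c‖ ^ 2) * sig - (sig ^ 2 / (2 * α) + η * sig) -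
          ⟪f, z - c⟫)) :=
  stmt_13_general n A r α η hr hα f c y z lam mu sig e1 e2 e3 e4 e5 hSa
end

section
/- (Global optimality) Suppose (λ̄, μ̄, ς̄) ∈ S_a⁺ is a stationary point of the canonical dual function Π^d (equivalently, (x̄, λ̄, μ̄, ς̄) is a stationary point of Ξ with (λ̄, μ̄, ς̄) ∈ S_a⁺, where x̄ is given by the explicit formula). If additionally μ̄ ≥ 0, then x̄ is the unique global minimizer of Π on the feasible set X_c: Π(x̄) < Π(x) for all x ∈ X_c, x ≠ x̄. -/
/-!
For fixed `(λ̄, μ̄, ς̄)` the function `Ξ(·, λ̄, μ̄, ς̄)` is quadratic, its gradient vanishes at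
`x̄`, and its Hessian is positive definite on `S_a⁺`, so
`Ξ(x̄) < Ξ(x)` for `x ≠ x̄`. Stationarity in `λ` and `ς` gives `Ξ(x̄) = Π(x̄)`. On `X_c` the
`λ`-term of `Ξ` vanishes and, by the Fenchel–Young inequality for `V` and `V*` and `μ̄ ≥ 0`,
the `μ`-term is nonpositive, so `Ξ(x) ≤ Π(x)`.
-/

open scoped RealInnerProductSpace

/-- Fenchel–Young for `V(t) = α/2 (t - η)²`, whose conjugate is `V*(s) = s²/(2α) + η s`. -/
theorem young_inequality_quadratic {α : ℝ} (hα : 0 < α) (η t s : ℝ) :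
    t * s - (s ^ 2 / (2 * α) + η * s) ≤ α / 2 * (t - η) ^ 2 := by
  have key : α / 2 * (t - η) ^ 2 - (t * s - (s ^ 2 / (2 * α) + η * s))
      = (α * (t - η) - s) ^ 2 / (2 * α) := by
    field_simp
    ring
  have : 0 ≤ (α * (t - η) - s) ^ 2 / (2 * α) := by positivity
  linarith

theorem Matrix.PosDef.inner_toEuclideanLin_pos {n : Type*} [Fintype n] [DecidableEq n]
    {M : Matrix n n ℝ} (hM : M.PosDef) {w : EuclideanSpace ℝ n} (hw : w ≠ 0) :
    0 < ⟪w, M.toEuclideanLin w⟫ := by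
  simpa [EuclideanSpace.inner_eq_star_dotProduct, dotProduct_comm] using
    hM.dotProduct_mulVec_pos (x := WithLp.ofLp w) (by simpa using hw)

section CanonicalDuality

variable {E : Type*} [NormedAddCommGroup E] [InnerProductSpace ℝ E]

/-- The paper's `Ξ(y, z, λ, μ, ς)`, with `A` acting as the operator `T`. -/
noncomputable def canonicalLagrangian (T : E →ₗ[ℝ] E) (r α η lam mu sig : ℝ) (f c y z : E) :
    ℝ :=
  1 / 2 * ‖y - z‖ ^ 2 + lam * (1 / 2 * (⟪y, T y⟫ - r ^ 2)) +
    mu * ((1 / 2 * ‖z - c‖ ^ 2) * sig - (sig ^ 2 / (2 * α) + η * sig) - ⟪f, z - c⟫)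

/-- Twice the second-order part of `Ξ(·, λ, μ, ς)`; `t` stands for `μς`. -/
noncomputable def canonicalHessian (T : E →ₗ[ℝ] E) (lam t : ℝ) (u v : E) : ℝ :=
  ‖u - v‖ ^ 2 + lam * ⟪u, T u⟫ + t * ‖v‖ ^ 2

variable {T : E →ₗ[ℝ] E} {r α η lam mu sig : ℝ} {f c : E}

theorem canonicalLagrangian_le_of_feasible (hα : 0 < α) (hmu : 0 ≤ mu) {y z : E}
    (hy : 1 / 2 * (⟪y, T y⟫ - r ^ 2) = 0)
    (hz : α / 2 * (1 / 2 * ‖z - c‖ ^ 2 - η) ^ 2 - ⟪f, z - c⟫ = 0) :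
    canonicalLagrangian T r α η lam mu sig f c y z ≤ 1 / 2 * ‖y - z‖ ^ 2 := by
  have hg : (1 / 2 * ‖z - c‖ ^ 2) * sig - (sig ^ 2 / (2 * α) + η * sig) - ⟪f, z - c⟫ ≤ 0 := by
    linarith [young_inequality_quadratic hα η (1 / 2 * ‖z - c‖ ^ 2) sig]
  rw [canonicalLagrangian, hy, mul_zero, add_zero]
  linarith [mul_nonpos_of_nonneg_of_nonpos hmu hg]

theorem canonicalLagrangian_add (hT : T.IsSymmetric) {yb zb : E}
    (hgy : yb - zb + lam • T yb = 0)
    (hgz : zb - yb + (mu * sig) • (zb - c) - mu • f = 0) (u v : E) :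
    canonicalLagrangian T r α η lam mu sig f c (yb + u) (zb + v) =
      canonicalLagrangian T r α η lam mu sig f c yb zb +
        1 / 2 * canonicalHessian T lam (mu * sig) u v := by
  have hyz : ‖yb + u - (zb + v)‖ ^ 2 = ‖yb - zb‖ ^ 2 + 2 * ⟪yb - zb, u - v⟫ + ‖u - v‖ ^ 2 := by
    rw [show yb + u - (zb + v) = (yb - zb) + (u - v) by abel, norm_add_sq_real]
  have hzc : ‖zb + v - c‖ ^ 2 = ‖zb - c‖ ^ 2 + 2 * ⟪zb - c, v⟫ + ‖v‖ ^ 2 := by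
    rw [show zb + v - c = (zb - c) + v by abel, norm_add_sq_real]
  have hTy : ⟪yb + u, T (yb + u)⟫ = ⟪yb, T yb⟫ + 2 * ⟪T yb, u⟫ + ⟪u, T u⟫ := by
    rw [map_add, inner_add_left, inner_add_right, inner_add_right, ← hT yb u,
      real_inner_comm (T yb) u]
    ring
  have hfz : ⟪f, zb + v - c⟫ = ⟪f, zb - c⟫ + ⟪f, v⟫ := by
    rw [show zb + v - c = (zb - c) + v by abel, inner_add_right]
  have hgrad : ⟪yb - zb + lam • T yb, u⟫ + ⟪zb - yb + (mu * sig) • (zb - c) - mu • f, v⟫ = 0 := by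
    rw [hgy, hgz, inner_zero_left, inner_zero_left, add_zero]
  simp only [inner_add_left, inner_sub_left, real_inner_smul_left] at hgrad
  simp only [canonicalLagrangian, canonicalHessian, hyz, hzc, hTy, hfz, inner_sub_left,
    inner_sub_right]
  linear_combination hgrad

theorem canonicalHessian_pos {t : ℝ} (hB : ∀ w : E, w ≠ 0 → 0 < ⟪w, w + lam • T w⟫)
    (hM : ∀ w : E, w ≠ 0 → 0 < ⟪w, (1 + t) • (w + lam • T w) - w⟫) {u v : E}
    (huv : (u, v) ≠ 0) : 0 < canonicalHessian T lam t u v := by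
  have hM' : ∀ w : E,
      ⟪w, (1 + t) • (w + lam • T w) - w⟫ = (1 + t) * ⟪w, w + lam • T w⟫ - ‖w‖ ^ 2 := by
    intro w
    rw [inner_sub_right, real_inner_smul_right, real_inner_self_eq_norm_sq]
  have ht : ∀ w : E, w ≠ 0 → 0 < 1 + t := by
    intro w hw
    have hw2 : 0 < ‖w‖ ^ 2 := by positivity
    have := hM w hw
    rw [hM'] at this
    exact (pos_iff_pos_of_mul_pos (by linarith : 0 < (1 + t) * ⟪w, w + lam • T w⟫)).2 (hB w hw)
  by_cases hu : u = 0
  · have hv : v ≠ 0 := fun hv => huv (by simp [hu, hv])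
    have : 0 < (1 + t) * ‖v‖ ^ 2 := mul_pos (ht v hv) (by positivity)
    simp only [canonicalHessian, hu, zero_sub, norm_neg, inner_zero_left]
    linarith
  · -- completing the square in `v`
    have key : (1 + t) * canonicalHessian T lam t u v =
        ⟪u, (1 + t) • (u + lam • T u) - u⟫ + ‖u - (1 + t) • v‖ ^ 2 := by
      simp only [canonicalHessian, hM', norm_sub_sq_real, inner_add_right, real_inner_smul_right,
        real_inner_self_eq_norm_sq, norm_smul, Real.norm_eq_abs, mul_pow, sq_abs]
      ring
    have : 0 < (1 + t) * canonicalHessian T lam t u v := by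
      rw [key]; linarith [hM u hu, sq_nonneg ‖u - (1 + t) • v‖]
    exact (pos_iff_pos_of_mul_pos this).1 (ht u hu)

theorem half_norm_sq_lt_of_stationary (hT : T.IsSymmetric) (hα : 0 < α) (hmu : 0 ≤ mu)
    (hB : ∀ w : E, w ≠ 0 → 0 < ⟪w, w + lam • T w⟫)
    (hM : ∀ w : E, w ≠ 0 → 0 < ⟪w, (1 + mu * sig) • (w + lam • T w) - w⟫) {yb zb : E}
    (hgy : yb - zb + lam • T yb = 0)
    (hgz : zb - yb + (mu * sig) • (zb - c) - mu • f = 0)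
    (hlam : 1 / 2 * (⟪yb, T yb⟫ - r ^ 2) = 0)
    (hsig : (1 / 2 * ‖zb - c‖ ^ 2) * sig - (sig ^ 2 / (2 * α) + η * sig) - ⟪f, zb - c⟫ = 0)
    {y z : E} (hy : 1 / 2 * (⟪y, T y⟫ - r ^ 2) = 0)
    (hz : α / 2 * (1 / 2 * ‖z - c‖ ^ 2 - η) ^ 2 - ⟪f, z - c⟫ = 0) (hne : (y, z) ≠ (yb, zb)) :
    1 / 2 * ‖yb - zb‖ ^ 2 < 1 / 2 * ‖y - z‖ ^ 2 := by
  have hH : 0 < canonicalHessian T lam (mu * sig) (y - yb) (z - zb) :=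
    canonicalHessian_pos hB hM fun h => hne (by simpa [sub_eq_zero] using h)
  calc 1 / 2 * ‖yb - zb‖ ^ 2 = canonicalLagrangian T r α η lam mu sig f c yb zb := by
        rw [canonicalLagrangian, hlam, hsig]; ring
    _ < canonicalLagrangian T r α η lam mu sig f c y z := by
        have := canonicalLagrangian_add (r := r) (α := α) (η := η) hT hgy hgz (y - yb) (z - zb)
        rw [add_sub_cancel, add_sub_cancel] at this
        linarith
    _ ≤ 1 / 2 * ‖y - z‖ ^ 2 := canonicalLagrangian_le_of_feasible hα hmu hy hz

end CanonicalDuality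

theorem stmt_14_general (n : ℕ) (A : Matrix (Fin n) (Fin n) ℝ) (hA : A.PosDef)
    (r α η : ℝ) (hα : 0 < α)
    (f c : EuclideanSpace ℝ (Fin n))
    (yb zb : EuclideanSpace ℝ (Fin n)) (lam mu sig : ℝ)
    -- (λ̄, μ̄, ς̄) ∈ S_a⁺
    (h1 : (1 + lam • A).PosDef)
    (h2 : ((1 + mu * sig) • (1 + lam • A) - 1).PosDef)
    (hmu : 0 ≤ mu)
    -- (x̄, λ̄, μ̄, ς̄) is a stationary point of Ξ
    (e1 : yb - zb + lam • (Matrix.toEuclideanLin A yb) = 0)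
    (e2 : zb - yb + (mu * sig) • (zb - c) - mu • f = 0)
    (e3 : 1 / 2 * (⟪yb, Matrix.toEuclideanLin A yb⟫ - r ^ 2) = 0)
    (e4 : (1 / 2 * ‖zb - c‖ ^ 2) * sig - (sig ^ 2 / (2 * α) + η * sig) -
      ⟪f, zb - c⟫ = 0) :
    ∀ y z : EuclideanSpace ℝ (Fin n),
      1 / 2 * (⟪y, Matrix.toEuclideanLin A y⟫ - r ^ 2) = 0 →
      α / 2 * (1 / 2 * ‖z - c‖ ^ 2 - η) ^ 2 - ⟪f, z - c⟫ = 0 →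
      (y, z) ≠ (yb, zb) →
      1 / 2 * ‖yb - zb‖ ^ 2 < 1 / 2 * ‖y - z‖ ^ 2 := fun _ _ hy hz hne =>
  half_norm_sq_lt_of_stationary (Matrix.isSymmetric_toEuclideanLin_iff.2 hA.1) hα hmu
    (fun w hw => by simpa using h1.inner_toEuclideanLin_pos hw)
    (fun w hw => by simpa using h2.inner_toEuclideanLin_pos hw) e1 e2 e3 e4 hy hz hne

/-- Global optimality: a stationary point (x̄, λ̄, μ̄, ς̄) of Ξ with (λ̄, μ̄, ς̄) ∈ S_a⁺ and
μ̄ ≥ 0 gives the unique global minimizer x̄ of Π on the feasible set X_c. -/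
theorem stmt_14 (n : ℕ) (A : Matrix (Fin n) (Fin n) ℝ) (hA : A.PosDef)
    (r α η : ℝ) (hr : 0 < r) (hα : 0 < α)
    (f c : EuclideanSpace ℝ (Fin n))
    (yb zb : EuclideanSpace ℝ (Fin n)) (lam mu sig : ℝ)
    -- (λ̄, μ̄, ς̄) ∈ S_a⁺
    (h1 : (1 + lam • A).PosDef)
    (h2 : ((1 + mu * sig) • (1 + lam • A) - 1).PosDef)
    (hmu : 0 ≤ mu)
    -- (x̄, λ̄, μ̄, ς̄) is a stationary point of Ξ
    (e1 : yb - zb + lam • (Matrix.toEuclideanLin A yb) = 0)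
    (e2 : zb - yb + (mu * sig) • (zb - c) - mu • f = 0)
    (e3 : 1 / 2 * (⟪yb, Matrix.toEuclideanLin A yb⟫ - r ^ 2) = 0)
    (e4 : (1 / 2 * ‖zb - c‖ ^ 2) * sig - (sig ^ 2 / (2 * α) + η * sig) -
      ⟪f, zb - c⟫ = 0)
    (e5 : mu * (1 / 2 * ‖zb - c‖ ^ 2 - (sig / α + η)) = 0) :
    ∀ y z : EuclideanSpace ℝ (Fin n),
      1 / 2 * (⟪y, Matrix.toEuclideanLin A y⟫ - r ^ 2) = 0 →
      α / 2 * (1 / 2 * ‖z - c‖ ^ 2 - η) ^ 2 - ⟪f, z - c⟫ = 0 →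
      (y, z) ≠ (yb, zb) →
      1 / 2 * ‖yb - zb‖ ^ 2 < 1 / 2 * ‖y - z‖ ^ 2 :=
  stmt_14_general n A hA r α η hα f c yb zb lam mu sig h1 h2 hmu e1 e2 e3 e4
end
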